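/- For any n ≥ 1, the integral over [0,∞)^{2n} of exp(-max(v_1+...+v_n, w_1+...+w_n)) dv_1...dw_n equals the binomial coefficient C(2n, n). -/

import Mathlib

/-!
Writing `e^{-φ} = ∫_{u > φ} e^{-u} du` and applying Tonelli, the integral of `e^{-φ}` is
`∫ e^{-u} · vol {φ < u} du`. For `φ = max (∑ v, ∑ w)` on the positive orthant the sublevel set
`{φ < u}` is a product of two corner simplices, of volumes `u^n/n!` and `u^m/m!`, so the integral
is `∫₀^∞ e^{-u} u^{n+m} du / (n! m!) = (n+m)! / (n! m!)`.
-/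

open MeasureTheory Real Set
open scoped Nat

def cornerSimplex (n : ℕ) (t : ℝ) : Set (Fin n → ℝ) :=
  {x | (∀ i, 0 ≤ x i) ∧ ∑ i, x i < t}

lemma cornerSimplex_eq_empty (n : ℕ) {t : ℝ} (ht : t ≤ 0) : cornerSimplex n t = ∅ :=
  eq_empty_of_forall_notMem fun _ ⟨hx, hlt⟩ =>
    (Finset.sum_nonneg fun i _ => hx i).not_gt (hlt.trans_le ht)

lemma volume_cornerSimplex_succ (n : ℕ) (t : ℝ) :
    volume (cornerSimplex (n + 1) t) = ∫⁻ a in Ici 0, volume (cornerSimplex n (t - a)) := by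
  let T : Set (ℝ × (Fin n → ℝ)) := {q | 0 ≤ q.1 ∧ q.2 ∈ cornerSimplex n (t - q.1)}
  have hT : MeasurableSet T := by
    simp only [T, cornerSimplex]
    measurability
  have hpre : cornerSimplex (n + 1) t = MeasurableEquiv.piFinSuccAbove (fun _ => ℝ) 0 ⁻¹' T := by
    ext x
    simp [T, cornerSimplex, Fin.sum_univ_succ, Fin.forall_fin_succ, Fin.tail, and_assoc,
      lt_sub_iff_add_lt']
  rw [hpre, (volume_preserving_piFinSuccAbove (fun _ => ℝ) 0).measure_preimage hT.nullMeasurableSet,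
    Measure.volume_eq_prod, Measure.prod_apply hT, ← lintegral_indicator measurableSet_Ici]
  congr 1
  ext a
  by_cases ha : 0 ≤ a <;> simp [T, ha]

lemma volume_cornerSimplex (n : ℕ) {t : ℝ} (ht : 0 < t) :
    volume (cornerSimplex n t) = ENNReal.ofReal (t ^ n / n !) := by
  induction n generalizing t with
  | zero => simp [cornerSimplex, ht, volume_pi]
  | succ n ih =>
    have hvanish : ∀ a ∈ Ici t, volume (cornerSimplex n (t - a)) = 0 := fun a ha => by
      rw [cornerSimplex_eq_empty n (sub_nonpos.2 ha), measure_empty]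
    have hint : IntegrableOn (fun a => (t - a) ^ n / n !) (Ioo 0 t) :=
      (Continuous.integrableOn_Icc (by fun_prop)).mono_set Ioo_subset_Icc_self
    calc volume (cornerSimplex (n + 1) t)
        = ∫⁻ a in Ioo 0 t, ENNReal.ofReal ((t - a) ^ n / n !) := by
          rw [volume_cornerSimplex_succ, Measure.restrict_congr_set Ioi_ae_eq_Ici.symm,
            ← Ioo_union_Ici_eq_Ioi ht, lintegral_union measurableSet_Ici
              ((Iio_disjoint_Ici le_rfl).mono_left Ioo_subset_Iio_self),
            setLIntegral_congr_fun measurableSet_Ici hvanish, lintegral_zero, add_zero]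
          exact setLIntegral_congr_fun measurableSet_Ioo fun a ha => ih (sub_pos.2 ha.2)
      _ = ENNReal.ofReal (∫ a in 0..t, (t - a) ^ n / n !) := by
          rw [intervalIntegral.integral_of_le ht.le, integral_Ioc_eq_integral_Ioo,
            ofReal_integral_eq_lintegral_ofReal hint
              (ae_restrict_of_forall_mem measurableSet_Ioo fun a ha => by
                have := sub_nonneg.2 ha.2.le; positivity)]
      _ = ENNReal.ofReal (t ^ (n + 1) / (n + 1)!) := by
          rw [intervalIntegral.integral_div, intervalIntegral.integral_comp_sub_left
            (fun x => x ^ n), sub_self, sub_zero, integral_pow, Nat.factorial_succ]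
          simp [div_div]

lemma ofReal_exp_neg_eq_lintegral_Ioi (c : ℝ) :
    ENNReal.ofReal (exp (-c)) = ∫⁻ u in Ioi c, ENNReal.ofReal (exp (-u)) := by
  have hint : IntegrableOn (fun u => exp (-u)) (Ioi c) := by
    simpa using exp_neg_integrableOn_Ioi c one_pos
  rw [← integral_exp_neg_Ioi c]
  exact ofReal_integral_eq_lintegral_ofReal hint (ae_of_all _ fun u => (exp_pos _).le)

lemma lintegral_ofReal_exp_neg_eq_lintegral_measure_lt {α : Type*} [MeasurableSpace α]
    (μ : Measure α) [SFinite μ] {f : α → ℝ} (hf : Measurable f) :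
    ∫⁻ x, ENNReal.ofReal (exp (-f x)) ∂μ =
      ∫⁻ u, ENNReal.ofReal (exp (-u)) * μ {x | f x < u} := by
  let F : α → ℝ → ENNReal := fun x u => if f x < u then ENNReal.ofReal (exp (-u)) else 0
  have hF : Measurable (Function.uncurry F) :=
    Measurable.ite (measurableSet_lt (hf.comp measurable_fst) measurable_snd)
      (by fun_prop) measurable_const
  calc ∫⁻ x, ENNReal.ofReal (exp (-f x)) ∂μ = ∫⁻ x, (∫⁻ u, F x u) ∂μ := by
        congr 1 with x
        rw [ofReal_exp_neg_eq_lintegral_Ioi, ← lintegral_indicator measurableSet_Ioi]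
        rfl
    _ = ∫⁻ u, ∫⁻ x, F x u ∂μ := lintegral_lintegral_swap hF.aemeasurable
    _ = ∫⁻ u, ENNReal.ofReal (exp (-u)) * μ {x | f x < u} := by
        congr 1 with u
        rw [← lintegral_indicator_const (measurableSet_lt hf measurable_const)]
        rfl

lemma lintegral_Ioi_ofReal_exp_neg_mul_pow (k : ℕ) :
    ∫⁻ u in Ioi 0, ENNReal.ofReal (exp (-u) * u ^ k) = k ! := by
  have hGamma := Real.Gamma_eq_integral (s := k + 1) (by positivity)
  have hconv := Real.GammaIntegral_convergent (s := k + 1) (by positivity)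
  simp only [add_sub_cancel_right, Real.rpow_natCast] at hGamma hconv
  rw [← ofReal_integral_eq_lintegral_ofReal hconv
      (ae_restrict_of_forall_mem measurableSet_Ioi fun u hu => by
        have := (mem_Ioi.1 hu).le; positivity),
    ← hGamma, Real.Gamma_nat_eq_factorial, ENNReal.ofReal_natCast]

lemma lintegral_ofReal_exp_neg_mul_volume_cornerSimplex_prod (n m : ℕ) :
    ∫⁻ u, ENNReal.ofReal (exp (-u)) * volume (cornerSimplex n u ×ˢ cornerSimplex m u) =
      ENNReal.ofReal ((n + m).choose n) := by
  have hslice : ∀ u, ENNReal.ofReal (exp (-u)) * volume (cornerSimplex n u ×ˢ cornerSimplex m u) =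
      (Ioi 0).indicator (fun u => ENNReal.ofReal (exp (-u) * u ^ (n + m)) *
        ENNReal.ofReal ((n ! * m ! : ℝ)⁻¹)) u := by
    intro u
    rw [Measure.volume_eq_prod, Measure.prod_prod]
    rcases le_or_gt u 0 with hu | hu
    · simp [cornerSimplex_eq_empty _ hu, hu]
    · rw [indicator_of_mem (mem_Ioi.2 hu), volume_cornerSimplex n hu, volume_cornerSimplex m hu,
        ← ENNReal.ofReal_mul (by positivity), ← ENNReal.ofReal_mul (by positivity),
        ← ENNReal.ofReal_mul (by positivity)]
      congr 1
      rw [pow_add]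
      field_simp
  rw [lintegral_congr hslice, lintegral_indicator measurableSet_Ioi,
    lintegral_mul_const _ (by fun_prop), lintegral_Ioi_ofReal_exp_neg_mul_pow,
    ← ENNReal.ofReal_natCast, ← ENNReal.ofReal_mul (by positivity),
    Nat.cast_add_choose, div_eq_mul_inv]

theorem integral_exp_neg_max_sum (n m : ℕ) :
    ∫ p in (univ.pi fun _ : Fin n => Ici (0 : ℝ)) ×ˢ (univ.pi fun _ : Fin m => Ici (0 : ℝ)),
      exp (-max (∑ i, p.1 i) (∑ i, p.2 i)) = (n + m).choose n := by
  have hmax : Measurable fun p : (Fin n → ℝ) × (Fin m → ℝ) => max (∑ i, p.1 i) (∑ i, p.2 i) := by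
    fun_prop
  have hlevel : ∀ u, {p : (Fin n → ℝ) × (Fin m → ℝ) | max (∑ i, p.1 i) (∑ i, p.2 i) < u} ∩
      (univ.pi fun _ => Ici 0) ×ˢ (univ.pi fun _ => Ici 0) =
        cornerSimplex n u ×ˢ cornerSimplex m u := by
    intro u
    ext p
    simp only [cornerSimplex, mem_inter_iff, mem_ofPred_eq, mem_prod, mem_univ_pi, mem_Ici,
      max_lt_iff]
    tauto
  rw [integral_eq_lintegral_of_nonneg_ae (ae_of_all _ fun _ => (exp_pos _).le) (by fun_prop),
    lintegral_ofReal_exp_neg_eq_lintegral_measure_lt _ hmax]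
  simp_rw [Measure.restrict_apply (measurableSet_lt hmax measurable_const), hlevel]
  rw [lintegral_ofReal_exp_neg_mul_volume_cornerSimplex_prod, ENNReal.toReal_ofReal (by positivity)]

theorem stmt1_general (n : ℕ) :
    (∫ p in (Set.univ.pi fun _ : Fin n => Set.Ici (0:ℝ)) ×ˢ
        (Set.univ.pi fun _ : Fin n => Set.Ici (0:ℝ)),
      Real.exp (-(max (∑ i, p.1 i) (∑ i, p.2 i)))) = ((2 * n).choose n : ℝ) := by
  rw [two_mul]
  exact integral_exp_neg_max_sum n n

/-- For `n ≥ 1`, the integral over `[0,∞)^{2n}` of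
`exp(-max(v₁+⋯+vₙ, w₁+⋯+wₙ))` equals the binomial coefficient `C(2n, n)`. -/
theorem stmt1 (n : ℕ) (hn : 1 ≤ n) :
    (∫ p in (Set.univ.pi fun _ : Fin n => Set.Ici (0:ℝ)) ×ˢ
        (Set.univ.pi fun _ : Fin n => Set.Ici (0:ℝ)),
      Real.exp (-(max (∑ i, p.1 i) (∑ i, p.2 i)))) = ((2 * n).choose n : ℝ) :=
  stmt1_general n
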